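/- arXiv:1201.1728 — 4 statements merged into one kernel-verified Lean document; each statement's English description precedes it below -/
import Mathlib

section
/- For every integer n ≥ 2 and every i ∈ {0,1,…,n}, the set S_i = {σ ∈ Alt_{n+1} : σ(0) = i or σ(1) = i} is a worst-case efficient dominating set of the star digraph ST⃗_{n+1}, and its cardinality is |S_i| = n!. -/
/-!
Track the position `σ⁻¹ i` of the letter `i`: the vertices of `S_i` are those with position `0`
or `1`, and along an arc `σ → σ ∘ gₖ` the position moves by `gₖ⁻¹`, that is `0 ↦ 1 ↦ k ↦ 0`,
fixing all other positions. So inside `S_i` arcs only go from position `0` to position `1`,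
which gives ±stability, and a vertex with position `k ∉ {0, 1}` has exactly one arc into `S_i`
(by `gₖ`) and exactly one arc from `S_i` (by `gₖ⁻¹`). For the count, right multiplication by the
odd transposition `(0 1)` identifies `S_i` with the permutations sending `0` to `i`.
-/

/-- The 3-cycle `gᵢ` determined by `gᵢ 0 = i`, `gᵢ i = 1`, `gᵢ 1 = 0`. -/
def gcyc {m : ℕ} [NeZero m] (i : Fin m) : Equiv.Perm (Fin m) :=
  Equiv.swap 1 i * Equiv.swap 0 1

/-- Vertices of the star digraph `ST⃗_m`: the even permutations of `{0, …, m-1}`. -/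
abbrev StarVertex (m : ℕ) := {σ : Equiv.Perm (Fin m) // σ ∈ alternatingGroup (Fin m)}

/-- The arc relation of the star digraph `ST⃗_m`: there is an arc from `σ` to `σ ∘ gᵢ`
for each `i ∈ {2, …, m-1}`. -/
def starArc {m : ℕ} [NeZero m] (σ τ : StarVertex m) : Prop :=
  ∃ i : Fin m, 2 ≤ i.val ∧ (τ : Equiv.Perm (Fin m)) = (σ : Equiv.Perm (Fin m)) * gcyc i

/-- A set `S` of vertices is ±stable for the arc relation `A` if every vertex of the
subdigraph induced by `S` has in-degree `0` or out-degree `0` there. -/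
def IsPMStable {V : Type*} (A : V → V → Prop) (S : Set V) : Prop :=
  ∀ v ∈ S, (∀ u ∈ S, ¬ A u v) ∨ (∀ u ∈ S, ¬ A v u)

/-- A set `S` of vertices is perfect ±dominating for the arc relation `A` if every vertex
outside `S` has exactly one in-neighbor in `S` and exactly one out-neighbor in `S`. -/
def IsPerfectPMDominating {V : Type*} (A : V → V → Prop) (S : Set V) : Prop :=
  ∀ v, v ∉ S → (∃! u, u ∈ S ∧ A u v) ∧ (∃! w, w ∈ S ∧ A v w)

/-- A worst-case efficient dominating set: perfect ±dominating and ±stable. -/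
def IsWCEDS {V : Type*} (A : V → V → Prop) (S : Set V) : Prop :=
  IsPerfectPMDominating A S ∧ IsPMStable A S

/-- The set `S_i = {σ ∈ Alt_m : σ 0 = i or σ 1 = i}`. -/
def Sset (m : ℕ) [NeZero m] (i : Fin m) : Set (StarVertex m) :=
  {σ | (σ : Equiv.Perm (Fin m)) 0 = i ∨ (σ : Equiv.Perm (Fin m)) 1 = i}

open Equiv
open scoped Nat

section AlternatingFiber

variable {α : Type*} [Fintype α] [DecidableEq α] {a b : α}

lemma mul_swap_mem_alternatingGroup_iff (hab : a ≠ b) {π : Perm α} :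
    π * swap a b ∈ alternatingGroup α ↔ π ∉ alternatingGroup α := by
  rw [Perm.mem_alternatingGroup, Perm.mem_alternatingGroup, map_mul, Perm.sign_swap hab]
  rcases Int.units_eq_one_or (Perm.sign π) with h | h <;> simp [h]

def alternatingApplyEqOrEquiv (hab : a ≠ b) (c : α) :
    {σ : alternatingGroup α // (σ : Perm α) a = c ∨ (σ : Perm α) b = c} ≃
      {π : Perm α // π a = c} where
  toFun σ :=
    if h : (σ : Perm α) a = c then ⟨σ, h⟩
    else ⟨σ * swap a b, by simpa using σ.2.resolve_left h⟩
  invFun π :=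
    if h : Perm.sign π.1 = 1 then ⟨⟨π, h⟩, Or.inl π.2⟩
    else ⟨⟨π * swap a b, (mul_swap_mem_alternatingGroup_iff hab).2 h⟩,
      Or.inr (by simpa using π.2)⟩
  left_inv σ := by
    have hσ : Perm.sign (σ : Perm α) = 1 := σ.1.2
    by_cases h : (σ : Perm α) a = c <;> simp [h, hσ, hab, mul_assoc]
  right_inv π := by
    have hb : π.1 b ≠ c := fun h => hab (π.1.injective (π.2.trans h.symm))
    by_cases h : Perm.sign π.1 = 1 <;> simp [h, hb, π.2, mul_assoc]

end AlternatingFiber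

lemma Equiv.Perm.decomposeFin_fst {n : ℕ} (π : Perm (Fin (n + 1))) :
    (Perm.decomposeFin π).1 = π 0 := by
  simpa using (Perm.decomposeFin_symm_apply_zero (Perm.decomposeFin π).1
    (Perm.decomposeFin π).2).symm

lemma Equiv.Perm.card_apply_zero_eq {n : ℕ} (i : Fin (n + 1)) :
    Nat.card {π : Perm (Fin (n + 1)) // π 0 = i} = n ! := by
  let e : {π : Perm (Fin (n + 1)) // π 0 = i} ≃ {j // j = i} × Perm (Fin n) :=
    (Perm.decomposeFin.subtypeEquiv fun π => by rw [Perm.decomposeFin_fst]).trans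
      prodSubtypeFstEquivSubtypeProd
  rw [Nat.card_congr e]
  simp [Fintype.card_perm]

section StarDigraph

variable {m : ℕ} [NeZero m] {k : Fin m}

lemma Fin.ne_zero_of_two_le_val (hk : 2 ≤ k.val) : k ≠ 0 := by
  rintro rfl; simp at hk

lemma Fin.ne_one_of_two_le_val (hk : 2 ≤ k.val) : k ≠ 1 := by
  rintro rfl; have := Nat.mod_le 1 m; rw [Fin.val_one'] at hk; omega

lemma Fin.zero_ne_one_of_two_le_val (hk : 2 ≤ k.val) : (0 : Fin m) ≠ 1 := by
  rw [Ne, Fin.ext_iff, Fin.val_zero, Fin.val_one', Nat.mod_eq_of_lt (by omega)]; omega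

lemma Fin.two_le_val_of_ne_zero_of_ne_one (h0 : k ≠ 0) (h1 : k ≠ 1) : 2 ≤ k.val := by
  by_contra! hk
  obtain hk | hk : k.val = 0 ∨ k.val = 1 := by omega
  · exact h0 (Fin.ext hk)
  · exact h1 (Fin.ext (by rw [hk, Fin.val_one', Nat.mod_eq_of_lt (by omega)]))

lemma gcyc_apply_zero (k : Fin m) : gcyc k 0 = k := by
  simp [gcyc, Perm.mul_apply]

lemma gcyc_apply_one (hk : 2 ≤ k.val) : gcyc k 1 = 0 := by
  simp only [gcyc, Perm.mul_apply, swap_apply_right]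
  exact swap_apply_of_ne_of_ne (Fin.zero_ne_one_of_two_le_val hk)
    (Fin.ne_zero_of_two_le_val hk).symm

lemma gcyc_apply_self (hk : 2 ≤ k.val) : gcyc k k = 1 := by
  simp only [gcyc, Perm.mul_apply]
  rw [swap_apply_of_ne_of_ne (Fin.ne_zero_of_two_le_val hk) (Fin.ne_one_of_two_le_val hk),
    swap_apply_right]

lemma gcyc_mem_alternatingGroup (hk : 2 ≤ k.val) : gcyc k ∈ alternatingGroup (Fin m) := by
  rw [Perm.mem_alternatingGroup, gcyc, map_mul, Perm.sign_swap (Fin.ne_one_of_two_le_val hk).symm,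
    Perm.sign_swap (Fin.zero_ne_one_of_two_le_val hk)]
  rfl

variable {i : Fin m}

lemma not_starArc_of_apply_zero_eq {u v : StarVertex m} (hu : u ∈ Sset m i)
    (hv : (v : Perm (Fin m)) 0 = i) : ¬ starArc u v := by
  rintro ⟨k, hk, hkv⟩
  rw [hkv, Perm.mul_apply, gcyc_apply_zero] at hv
  rcases hu with h | h
  · exact Fin.ne_zero_of_two_le_val hk ((u : Perm (Fin m)).injective (hv.trans h.symm))
  · exact Fin.ne_one_of_two_le_val hk ((u : Perm (Fin m)).injective (hv.trans h.symm))

lemma not_starArc_of_apply_one_eq {v w : StarVertex m} (hw : w ∈ Sset m i)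
    (hv₀ : (v : Perm (Fin m)) 0 ≠ i) (hv₁ : (v : Perm (Fin m)) 1 = i) : ¬ starArc v w := by
  rintro ⟨k, hk, hkw⟩
  rcases hw with h | h
  · rw [hkw, Perm.mul_apply, gcyc_apply_zero] at h
    exact Fin.ne_one_of_two_le_val hk ((v : Perm (Fin m)).injective (h.trans hv₁.symm))
  · rw [hkw, Perm.mul_apply, gcyc_apply_one hk] at h
    exact hv₀ h

lemma isPMStable_Sset (i : Fin m) : IsPMStable starArc (Sset m i) := by
  intro v hv
  by_cases h₀ : (v : Perm (Fin m)) 0 = i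
  · exact Or.inl fun u hu => not_starArc_of_apply_zero_eq hu h₀
  · exact Or.inr fun w hw => not_starArc_of_apply_one_eq hw h₀ (hv.resolve_left h₀)

lemma exists_two_le_val_apply_eq {σ : Perm (Fin m)} (h₀ : σ 0 ≠ i) (h₁ : σ 1 ≠ i) :
    ∃ k : Fin m, 2 ≤ k.val ∧ σ k = i :=
  ⟨σ⁻¹ i, Fin.two_le_val_of_ne_zero_of_ne_one (by rintro h; simp [← h] at h₀)
    (by rintro h; simp [← h] at h₁), by simp⟩

lemma existsUnique_outNeighbor_mem_Sset {v : StarVertex m} (h₀ : (v : Perm (Fin m)) 0 ≠ i)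
    (h₁ : (v : Perm (Fin m)) 1 ≠ i) : ∃! w, w ∈ Sset m i ∧ starArc v w := by
  obtain ⟨k, hk, hvk⟩ := exists_two_le_val_apply_eq h₀ h₁
  refine ⟨⟨v * gcyc k, mul_mem v.2 (gcyc_mem_alternatingGroup hk)⟩,
    ⟨Or.inl ?_, k, hk, rfl⟩, ?_⟩
  · rw [Perm.mul_apply, gcyc_apply_zero, hvk]
  rintro w ⟨hw, j, hj, hjw⟩
  have hvj : (v : Perm (Fin m)) j = i := by
    rcases hw with h | h
    · rwa [hjw, Perm.mul_apply, gcyc_apply_zero] at h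
    · rw [hjw, Perm.mul_apply, gcyc_apply_one hj] at h
      exact absurd h h₀
  obtain rfl : j = k := (v : Perm (Fin m)).injective (hvj.trans hvk.symm)
  exact Subtype.ext hjw

lemma existsUnique_inNeighbor_mem_Sset {v : StarVertex m} (h₀ : (v : Perm (Fin m)) 0 ≠ i)
    (h₁ : (v : Perm (Fin m)) 1 ≠ i) : ∃! u, u ∈ Sset m i ∧ starArc u v := by
  obtain ⟨k, hk, hvk⟩ := exists_two_le_val_apply_eq h₀ h₁
  refine ⟨⟨v * (gcyc k)⁻¹, mul_mem v.2 (inv_mem (gcyc_mem_alternatingGroup hk))⟩,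
    ⟨Or.inr ?_, k, hk, by simp⟩, ?_⟩
  · rw [Perm.mul_apply, Perm.inv_eq_iff_eq.2 (gcyc_apply_self hk).symm, hvk]
  rintro u ⟨hu, j, hj, hju⟩
  have hu₁ : (u : Perm (Fin m)) 1 = i := by
    refine hu.resolve_left fun h => h₁ ?_
    rw [hju, Perm.mul_apply, gcyc_apply_one hj, h]
  have hvj : (v : Perm (Fin m)) j = i := by
    rw [hju, Perm.mul_apply, gcyc_apply_self hj, hu₁]
  obtain rfl : j = k := (v : Perm (Fin m)).injective (hvj.trans hvk.symm)
  exact Subtype.ext (eq_mul_inv_of_mul_eq hju.symm)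

lemma isPerfectPMDominating_Sset (i : Fin m) : IsPerfectPMDominating starArc (Sset m i) := by
  intro v hv
  obtain ⟨h₀, h₁⟩ := not_or.1 hv
  exact ⟨existsUnique_inNeighbor_mem_Sset h₀ h₁, existsUnique_outNeighbor_mem_Sset h₀ h₁⟩

end StarDigraph

lemma ncard_Sset {n : ℕ} (hn : n ≠ 0) (i : Fin (n + 1)) : (Sset (n + 1) i).ncard = n ! := by
  have h01 : (0 : Fin (n + 1)) ≠ 1 := by simp [Fin.ext_iff, Nat.mod_eq_of_lt, hn]
  rw [← Nat.card_coe_set_eq]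
  exact (Nat.card_congr (alternatingApplyEqOrEquiv h01 i)).trans (Perm.card_apply_zero_eq i)

/-- For every integer `n ≥ 2` and every `i ∈ {0, …, n}`, the set
`S_i = {σ ∈ Alt_{n+1} : σ 0 = i or σ 1 = i}` is a worst-case efficient dominating set of
the star digraph `ST⃗_{n+1}`, of cardinality `n!`. -/
theorem stmt1 (n : ℕ) (hn : 2 ≤ n) (i : Fin (n + 1)) :
    IsWCEDS starArc (Sset (n + 1) i) ∧ (Sset (n + 1) i).ncard = Nat.factorial n :=
  ⟨⟨isPerfectPMDominating_Sset i, isPMStable_Sset i⟩, ncard_Sset (by omega) i⟩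
end

section
/- For every integer n ≥ 2, the star digraph ST⃗_n is strongly connected: for any two even permutations σ, τ ∈ Alt_n there is a directed path in ST⃗_n from σ to τ. -/
/-!
The star digraph is the Cayley digraph of `Alt_n` with respect to the 3-cycles `gᵢ`, and a
Cayley digraph of a finite group is strongly connected as soon as its generators generate the
group, since inverses are positive powers. Writing `t = (0 1)`, the group generated by the `gᵢ`
contains `t * (1 x)` for every `x ≠ 1` (it is `gₓ⁻¹`, or `1` for `x = 0`), hence, by conjugating
with these, `t * (a b)` for every transposition `(a b)`. Quotients of two such elements give
every product of two transpositions, in particular every 3-cycle, and 3-cycles generate `Alt_n`.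
-/

open Equiv Equiv.Perm

def cayleyArc {M : Type*} [Mul M] (S : Set M) (a b : M) : Prop :=
  ∃ s ∈ S, b = a * s

theorem reflTransGen_cayleyArc_mul_of_mem_closure {M : Type*} [Monoid M] {S : Set M} {g : M}
    (hg : g ∈ Submonoid.closure S) (x : M) :
    Relation.ReflTransGen (cayleyArc S) x (x * g) := by
  induction hg using Submonoid.closure_induction generalizing x with
  | mem s hs => exact .single ⟨s, hs, rfl⟩
  | one => rw [mul_one]
  | mul g h _ _ ihg ihh => exact (ihg x).trans (mul_assoc x g h ▸ ihh (x * g))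

theorem reflTransGen_cayleyArc_of_closure_eq_top {G : Type*} [Group G] [Finite G] {S : Set G}
    (hS : Subgroup.closure S = ⊤) (x y : G) :
    Relation.ReflTransGen (cayleyArc S) x y := by
  have hmem : x⁻¹ * y ∈ Submonoid.closure S := by
    rw [← Subgroup.closure_toSubmonoid_of_finite, hS]
    trivial
  simpa using reflTransGen_cayleyArc_mul_of_mem_closure hmem x

theorem alternatingGroup_le_of_forall_mul_swap_mem {α : Type*} [Fintype α] [DecidableEq α]
    {K : Subgroup (Perm α)} (t : Perm α) (hK : ∀ a b : α, a ≠ b → t * swap a b ∈ K) :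
    alternatingGroup α ≤ K := by
  rw [← closure_three_cycles_eq_alternating, Subgroup.closure_le]
  intro g hg
  obtain ⟨a, ha⟩ := hg.isCycle.nonempty_support
  have hga : a ≠ g a := fun h => mem_support.mp ha h.symm
  have hgga : g a ≠ g (g a) := g.injective.ne hga
  rw [hg.eq_swap_mul_swap_iff_mem_support.mpr ha]
  have h := mul_mem (inv_mem (hK a (g a) hga)) (hK (g a) (g (g a)) hgga)
  rwa [mul_inv_rev, swap_inv, mul_assoc, inv_mul_cancel_left] at h

def starGenerators (n : ℕ) : Set (Perm (Fin (n + 2))) :=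
  {π | ∃ i : Fin (n + 2), 2 ≤ i.val ∧ π = gcyc i}

section StarGenerators

variable {n : ℕ}

theorem gcyc_mem_alternatingGroup_s8 {i : Fin (n + 2)} (hi : 2 ≤ i.val) :
    gcyc i ∈ alternatingGroup (Fin (n + 2)) :=
  mul_mem_alternatingGroup_of_isSwap
    (swap_isSwap_iff.mpr (by rintro rfl; simp at hi))
    (swap_isSwap_iff.mpr zero_ne_one)

theorem swap_zero_one_mul_swap_one_mem_closure {x : Fin (n + 2)} (hx : x ≠ 1) :
    swap 0 1 * swap 1 x ∈ Subgroup.closure (starGenerators n) := by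
  by_cases hx0 : x = 0
  · subst hx0
    rw [swap_comm 1 0, swap_mul_self]
    exact one_mem _
  · have hx2 : 2 ≤ x.val := by
      simp only [ne_eq, Fin.ext_iff, Fin.val_zero, Fin.val_one] at hx hx0
      omega
    have hinv : swap 0 1 * swap 1 x = (gcyc x)⁻¹ := by
      rw [gcyc, mul_inv_rev, swap_inv, swap_inv]
    exact hinv ▸ inv_mem (Subgroup.subset_closure ⟨x, hx2, rfl⟩)

theorem swap_zero_one_mul_swap_mem_closure {a b : Fin (n + 2)} (hab : a ≠ b) :
    swap 0 1 * swap a b ∈ Subgroup.closure (starGenerators n) := by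
  by_cases ha : a = 1
  · subst ha
    exact swap_zero_one_mul_swap_one_mem_closure hab.symm
  by_cases hb : b = 1
  · subst hb
    rw [swap_comm a 1]
    exact swap_zero_one_mul_swap_one_mem_closure ha
  have hconj : swap 0 1 * swap a b =
      (swap 0 1 * swap 1 a) * (swap 0 1 * swap 1 b)⁻¹ * (swap 0 1 * swap 1 a) := by
    rw [← swap_mul_swap_mul_swap hb hab.symm, swap_comm b 1]
    simp only [mul_inv_rev, swap_inv, mul_assoc, swap_mul_self_mul]
  rw [hconj]
  have hva := swap_zero_one_mul_swap_one_mem_closure ha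
  exact mul_mem (mul_mem hva (inv_mem (swap_zero_one_mul_swap_one_mem_closure hb))) hva

theorem closure_starGenerators :
    Subgroup.closure (starGenerators n) = alternatingGroup (Fin (n + 2)) := by
  refine le_antisymm ?_ (alternatingGroup_le_of_forall_mul_swap_mem _ fun a b hab =>
    swap_zero_one_mul_swap_mem_closure hab)
  rw [Subgroup.closure_le]
  rintro _ ⟨i, hi, rfl⟩
  exact gcyc_mem_alternatingGroup_s8 hi

end StarGenerators

/-- For every integer `n ≥ 2` (here written `n + 2`), the star digraph `ST⃗_n` is strongly
connected: between any two even permutations there is a directed path. -/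
theorem stmt8 (n : ℕ) (σ τ : StarVertex (n + 2)) :
    Relation.ReflTransGen starArc σ τ := by
  -- `StarVertex (n + 2)` is the carrier of the group `alternatingGroup (Fin (n + 2))`.
  have htop := Subgroup.closure_preimage_eq_top (starGenerators n)
  rw [closure_starGenerators] at htop
  refine Relation.ReflTransGen.mono ?_ σ τ (reflTransGen_cayleyArc_of_closure_eq_top htop σ τ)
  rintro ρ ρ' ⟨s, ⟨i, hi, hs⟩, rfl⟩
  exact ⟨i, hi, congrArg (ρ.1 * ·) hs⟩
end

section
/- For every integer n ≥ 3, every arc of the star digraph ST⃗_n lies in exactly one directed cycle of length 3: the arc from σ to σ∘g_i lies in the directed triangle with vertex sequence (σ, σ∘g_i, σ∘g_i²), and there is no other directed 3-cycle of ST⃗_n containing that arc. -/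
open Equiv Perm

section gcyc

variable {m : ℕ} [NeZero m] {i j k : Fin m}

lemma Fin.ne_zero_ne_one_of_two_le_val (hi : 2 ≤ i.val) :
    i ≠ 0 ∧ i ≠ 1 ∧ (0 : Fin m) ≠ 1 := by
  obtain ⟨m', rfl⟩ : ∃ m', m = m' + 3 := ⟨m - 3, by have := i.isLt; omega⟩
  refine ⟨?_, ?_, by simp⟩ <;> (rintro rfl; simp at hi)

lemma isThreeCycle_gcyc (hi : 2 ≤ i.val) : (gcyc i).IsThreeCycle := by
  obtain ⟨hi0, hi1, h01⟩ := Fin.ne_zero_ne_one_of_two_le_val hi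
  rw [gcyc, swap_comm 0 1]
  exact isThreeCycle_swap_mul_swap_same hi1.symm h01.symm hi0

lemma gcyc_pow_three (hi : 2 ≤ i.val) : gcyc i ^ 3 = 1 := by
  rw [← (isThreeCycle_gcyc hi).orderOf]
  exact pow_orderOf_eq_one _

lemma gcyc_apply_zero_s9 : gcyc i 0 = i := by
  simp [gcyc]

lemma gcyc_apply_one_s9 (hi : 2 ≤ i.val) : gcyc i 1 = 0 := by
  obtain ⟨hi0, -, h01⟩ := Fin.ne_zero_ne_one_of_two_le_val hi
  simp [gcyc, swap_apply_of_ne_of_ne h01 hi0.symm]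

lemma gcyc_apply_self_s9 (hi : 2 ≤ i.val) : gcyc i i = 1 := by
  obtain ⟨hi0, hi1, -⟩ := Fin.ne_zero_ne_one_of_two_le_val hi
  simp [gcyc, swap_apply_of_ne_of_ne hi0 hi1]

lemma gcyc_apply_of_ne {x : Fin m} (hx0 : x ≠ 0) (hx1 : x ≠ 1) (hxi : x ≠ i) : gcyc i x = x := by
  simp [gcyc, swap_apply_of_ne_of_ne hx0 hx1, swap_apply_of_ne_of_ne hx1 hxi]

lemma eq_of_gcyc_mul_gcyc_mul_gcyc_eq_one (hj : 2 ≤ j.val) (hk : 2 ≤ k.val)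
    (h : gcyc i * gcyc j * gcyc k = 1) : j = i ∧ k = i := by
  obtain ⟨hj0, hj1, -⟩ := Fin.ne_zero_ne_one_of_two_le_val hj
  have hji : j = i := by
    by_contra hji
    have h1 := congr($h 1)
    simp only [mul_apply, one_apply, gcyc_apply_one_s9 hk, gcyc_apply_zero_s9,
      gcyc_apply_of_ne hj0 hj1 hji] at h1
    exact hj1 h1
  subst hji
  refine ⟨rfl, ?_⟩
  by_contra hkj
  have hjj := congr($h j)
  simp only [mul_apply, one_apply, gcyc_apply_of_ne hj0 hj1 (Ne.symm hkj), gcyc_apply_self_s9 hj,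
    gcyc_apply_one_s9 hj] at hjj
  exact hj0 hjj.symm

end gcyc

/-- For every `n ≥ 3` (here written `n + 3`), every arc of `ST⃗_n` lies in exactly one
directed 3-cycle: the arc from `σ` to `σ ∘ gᵢ` lies in the directed triangle
`(σ, σ ∘ gᵢ, σ ∘ gᵢ²)`, and in no other directed 3-cycle. -/
theorem stmt9 (n : ℕ) (σ τ : StarVertex (n + 3)) (i : Fin (n + 3)) (hi : 2 ≤ i.val)
    (hτ : (τ : Equiv.Perm (Fin (n + 3))) = (σ : Equiv.Perm (Fin (n + 3))) * gcyc i) :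
    (∃! w : StarVertex (n + 3), starArc τ w ∧ starArc w σ) ∧
    (∀ w : StarVertex (n + 3), starArc τ w → starArc w σ →
      (w : Equiv.Perm (Fin (n + 3)))
        = (σ : Equiv.Perm (Fin (n + 3))) * (gcyc i * gcyc i)) := by
  have hunique : ∀ w : StarVertex (n + 3), starArc τ w → starArc w σ →
      (w : Perm (Fin (n + 3))) = σ.1 * (gcyc i * gcyc i) := by
    rintro w ⟨j, hj, hτw⟩ ⟨k, hk, hwσ⟩
    have hclose : gcyc i * gcyc j * gcyc k = 1 := by
      apply mul_left_cancel (a := σ.1)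
      rw [mul_one]
      conv_rhs => rw [hwσ, hτw, hτ]
      simp only [mul_assoc]
    obtain ⟨rfl, -⟩ := eq_of_gcyc_mul_gcyc_mul_gcyc_eq_one hj hk hclose
    rw [hτw, hτ, mul_assoc]
  have hmem : gcyc i ∈ alternatingGroup (Fin (n + 3)) := (isThreeCycle_gcyc hi).mem_alternatingGroup
  let w₀ : StarVertex (n + 3) := ⟨σ.1 * (gcyc i * gcyc i), mul_mem σ.2 (mul_mem hmem hmem)⟩
  have hτw₀ : starArc τ w₀ := ⟨i, hi, by rw [hτ, mul_assoc]⟩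
  have hw₀σ : starArc w₀ σ := ⟨i, hi, by rw [mul_assoc, ← pow_three', gcyc_pow_three hi, mul_one]⟩
  exact ⟨⟨w₀, ⟨hτw₀, hw₀σ⟩, fun w hw => Subtype.ext (hunique w hw.1 hw.2)⟩, hunique⟩
end

section
/- The star digraph ST⃗_4, whose vertex set is the 12-element alternating group Alt_4, has no directed Hamiltonian cycle. -/
/-!
In a Hamiltonian cycle of a Cayley digraph `Cay(G; a, b)` the out-arcs are forced along the left
cosets of `⟨a * b⁻¹⟩` (Rankin): if the cycle leaves `g` by `a`, it cannot leave `g * a * b⁻¹` by `b`,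
since that arc would also end at `g * a`. In `Alt₄` with `a = g₂`, `b = g₃`, the element `g₂ * g₃⁻¹`
generates the stabiliser of `0`, so the cycle is the orbit of a successor map depending only on the
set of values `g 0` at which the cycle leaves `g` by `g₂`. Of the sixteen such maps none has an
orbit of length 12: all orbits have length 3, 4, 8 or 9.
-/

open Function Equiv

section CayleyDigraph

variable {G : Type*} [Group G] {a b : G} {succ : G → G}

theorem succ_mul_mul_inv_of_succ_eq_mul (hinj : Injective succ) (hab : a ≠ b)
    (hstep : ∀ g, succ g = g * a ∨ succ g = g * b) {g : G} (hg : succ g = g * a) :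
    succ (g * (a * b⁻¹)) = g * (a * b⁻¹) * a := by
  refine (hstep _).resolve_right fun h => hab ?_
  have : g * (a * b⁻¹) = g := hinj (by rw [h, hg]; group)
  simpa [mul_inv_eq_one] using this

theorem succ_mul_pow_of_succ_eq_mul (hinj : Injective succ) (hab : a ≠ b)
    (hstep : ∀ g, succ g = g * a ∨ succ g = g * b) {g : G} (hg : succ g = g * a) (j : ℕ) :
    succ (g * (a * b⁻¹) ^ j) = g * (a * b⁻¹) ^ j * a := by
  induction j with
  | zero => simpa using hg
  | succ j ih => simpa [pow_succ, mul_assoc] using succ_mul_mul_inv_of_succ_eq_mul hinj hab hstep ih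

end CayleyDigraph

theorem iterate_ne_self_of_bijective {V : Type*} {n : ℕ} {f : ZMod n → V} (hf : Bijective f)
    {σ : V → V} (hσ : ∀ k, σ (f k) = f (k + 1)) (v : V) {k : ℕ} (hk : 0 < k) (hkn : k < n) :
    σ^[k] v ≠ v := by
  obtain ⟨j, rfl⟩ := hf.2 v
  have hiter : ∀ i : ℕ, σ^[i] (f j) = f (j + i) := by
    intro i
    induction i with
    | zero => simp
    | succ i ih => rw [iterate_succ_apply', ih, hσ, Nat.cast_succ, add_assoc]
  rw [hiter]
  intro h
  have : ((k : ℕ) : ZMod n) = 0 := by simpa using hf.1 h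
  rw [ZMod.natCast_eq_zero_iff] at this
  exact absurd (Nat.le_of_dvd hk this) (not_le.2 hkn)

def g₂ : StarVertex 4 := ⟨gcyc 2, by rw [Perm.mem_alternatingGroup]; decide⟩

def g₃ : StarVertex 4 := ⟨gcyc 3, by rw [Perm.mem_alternatingGroup]; decide⟩

theorem g₂_ne_g₃ : g₂ ≠ g₃ := by decide

theorem starArc_four_iff {σ τ : StarVertex 4} : starArc σ τ ↔ τ = σ * g₂ ∨ τ = σ * g₃ := by
  constructor
  · rintro ⟨i, hi, hτ⟩
    obtain rfl | rfl : i = 2 ∨ i = 3 := by omega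
    exacts [Or.inl (Subtype.ext hτ), Or.inr (Subtype.ext hτ)]
  · rintro (rfl | rfl)
    exacts [⟨2, le_rfl, rfl⟩, ⟨3, by decide, rfl⟩]

theorem eq_mul_pow_of_apply_zero_eq {g h : StarVertex 4}
    (hgh : (g : Perm (Fin 4)) 0 = (h : Perm (Fin 4)) 0) : ∃ j : ℕ, h = g * (g₂ * g₃⁻¹) ^ j := by
  have hstab : ∀ x : Perm (Fin 4), Perm.sign x = 1 → x 0 = 0 →
      ∃ j : Fin 3, x = (gcyc 2 * (gcyc 3)⁻¹) ^ (j : ℕ) := by decide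
  obtain ⟨j, hj⟩ := hstab (g⁻¹ * h : StarVertex 4) (g⁻¹ * h).2
    (by simp [Perm.mul_apply, ← hgh])
  refine ⟨j, ?_⟩
  rw [← mul_inv_cancel_left g h]
  exact congrArg (g * ·) (Subtype.ext hj)

def cosetSucc (s : Finset (Fin 4)) (g : Perm (Fin 4)) : Perm (Fin 4) :=
  g * if g 0 ∈ s then gcyc 2 else gcyc 3

theorem cosetSucc_iterate_one (s : Finset (Fin 4)) :
    (cosetSucc s)^[8] 1 = 1 ∨ (cosetSucc s)^[9] 1 = 1 := by
  revert s
  decide +kernel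

theorem exists_semiconj_cosetSucc {succ : StarVertex 4 → StarVertex 4} (hinj : Injective succ)
    (hstep : ∀ g, succ g = g * g₂ ∨ succ g = g * g₃) :
    ∃ s, Semiconj Subtype.val succ (cosetSucc s) := by
  classical
  let s := Finset.univ.filter fun x => ∃ g : StarVertex 4, (g : Perm (Fin 4)) 0 = x ∧
    succ g = g * g₂
  refine ⟨s, fun g => ?_⟩
  by_cases hg : succ g = g * g₂
  · rw [cosetSucc, if_pos (Finset.mem_filter.2 ⟨Finset.mem_univ _, g, rfl, hg⟩), hg]
    rfl
  · have hs : (g : Perm (Fin 4)) 0 ∉ s := fun hmem => by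
      obtain ⟨-, g', hg', hg'succ⟩ := Finset.mem_filter.1 hmem
      obtain ⟨j, rfl⟩ := eq_mul_pow_of_apply_zero_eq hg'
      exact hg (succ_mul_pow_of_succ_eq_mul hinj g₂_ne_g₃ hstep hg'succ j)
    rw [cosetSucc, if_neg hs, (hstep g).resolve_left hg]
    rfl

/-- The star digraph `ST⃗_4` (on the 12-element alternating group `Alt_4`) has no directed
Hamiltonian cycle. -/
theorem stmt13 :
    ¬ ∃ f : ZMod 12 → StarVertex 4, Function.Bijective f ∧
      ∀ k : ZMod 12, starArc (f k) (f (k + 1)) := by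
  rintro ⟨f, hf, harc⟩
  set e := Equiv.ofBijective f hf
  set succ : StarVertex 4 → StarVertex 4 := fun v => f (e.symm v + 1)
  have hsucc : ∀ k, succ (f k) = f (k + 1) := fun k => by
    simp only [succ, e, Equiv.ofBijective_symm_apply_apply]
  have hinj : Injective succ := hf.1.comp ((add_left_injective 1).comp e.symm.injective)
  have hstep : ∀ v, succ v = v * g₂ ∨ succ v = v * g₃ := fun v =>
    starArc_four_iff.1 (by simpa [succ, e, Equiv.ofBijective_apply_symm_apply] using harc (e.symm v))
  obtain ⟨s, hs⟩ := exists_semiconj_cosetSucc hinj hstep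
  have hreturn : ∀ k, 0 < k → k < 12 → (cosetSucc s)^[k] 1 ≠ 1 := fun k hk hk12 h =>
    iterate_ne_self_of_bijective hf hsucc 1 hk hk12 (Subtype.ext ((hs.iterate_right k 1).trans h))
  rcases cosetSucc_iterate_one s with h | h
  exacts [hreturn 8 (by norm_num) (by norm_num) h, hreturn 9 (by norm_num) (by norm_num) h]
end
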